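/- arXiv:2310.20460 — 5 statements merged into one kernel-verified Lean document; each statement's English description precedes it below -/
import Mathlib

section
/- Let (X, Y) be bivariate normal with standard normal marginals and correlation ρ, with |ρ| ≤ ρ₀ < 1. Then for the absolute values, lim_{t→∞} P(|Y| > t | |X| > t) = 0; i.e., |X| and |Y| are quasi-asymptotically independent. -/
open MeasureTheory ProbabilityTheory Filter Topology

open Real Set

/-!
Since `√(1 - ρ²) ≤ 1`, we have `|Y| ≤ |ρ| |X| + |Z|`. Fix `1 < M` with `|ρ| M < 1`. On the event
`{|X| > t, |Y| > t}` either `|X| > M t`, or `|X| ≤ M t` and then `|Z| > (1 - |ρ| M) t`. By independence,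
`P(|Y| > t | |X| > t) ≤ P(|X| > M t) / P(|X| > t) + P(|Z| > (1 - |ρ| M) t)`.
The Chernoff bound `P(|X| > s) ≤ 2 exp (-s² / 2)` and the lower bound `φ(t + 1) ≤ P(|X| > t)`
make the first ratio `O(exp (((t + 1)² - M² t²) / 2))`, which tends to `0` because `M > 1`.
-/

lemma gaussianReal_real_Ici_le {s : ℝ} (hs : 0 ≤ s) :
    (gaussianReal 0 1).real (Ici s) ≤ exp (-s ^ 2 / 2) :=
  calc (gaussianReal 0 1).real (Ici s)
      ≤ exp (-s * s) * mgf id (gaussianReal 0 1) s :=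
        measure_ge_le_exp_mul_mgf s hs (integrable_exp_mul_gaussianReal s)
    _ = exp (-s ^ 2 / 2) := by
        rw [mgf_id_gaussianReal, ← exp_add]
        congr 1
        push_cast
        ring

lemma gaussianReal_real_Iic_neg (s : ℝ) :
    (gaussianReal 0 1).real (Iic (-s)) = (gaussianReal 0 1).real (Ici s) := by
  have hsymm : (gaussianReal 0 1).map (fun x => -x) = gaussianReal 0 1 := by
    rw [gaussianReal_map_neg, neg_zero]
  conv_rhs => rw [← hsymm, map_measureReal_apply measurable_neg measurableSet_Ici]
  simp only [neg_preimage, neg_Ici]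

lemma gaussianReal_real_abs_gt_le {s : ℝ} (hs : 0 ≤ s) :
    (gaussianReal 0 1).real {x | s < |x|} ≤ 2 * exp (-s ^ 2 / 2) :=
  calc (gaussianReal 0 1).real {x | s < |x|}
      ≤ (gaussianReal 0 1).real (Iic (-s) ∪ Ici s) :=
        measureReal_mono fun x (hx : s < |x|) => le_abs'.mp hx.le
    _ ≤ (gaussianReal 0 1).real (Iic (-s)) + (gaussianReal 0 1).real (Ici s) :=
        measureReal_union_le _ _
    _ ≤ 2 * exp (-s ^ 2 / 2) := by
        rw [gaussianReal_real_Iic_neg]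
        linarith [gaussianReal_real_Ici_le hs]

lemma gaussianPDFReal_le_of_abs_le {x y : ℝ} (h : |x| ≤ |y|) :
    gaussianPDFReal 0 1 y ≤ gaussianPDFReal 0 1 x := by
  simp only [gaussianPDFReal_def, sub_zero]
  gcongr _ * exp (-?_ / _)
  exact sq_le_sq.mpr h

lemma gaussianPDFReal_le_gaussianReal_real_abs_gt {s : ℝ} (hs : 0 ≤ s) :
    gaussianPDFReal 0 1 (s + 1) ≤ (gaussianReal 0 1).real {x | s < |x|} :=
  calc gaussianPDFReal 0 1 (s + 1)
      = gaussianPDFReal 0 1 (s + 1) * volume.real (Ioc s (s + 1)) := by simp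
    _ ≤ ∫ x in Ioc s (s + 1), gaussianPDFReal 0 1 x :=
        setIntegral_ge_of_const_le_real measurableSet_Ioc (by simp)
          (fun x hx => gaussianPDFReal_le_of_abs_le <| by
            rw [abs_of_pos (hs.trans_lt hx.1), abs_of_pos (by linarith)]
            exact hx.2)
          (integrable_gaussianPDFReal 0 1).integrableOn
    _ = (gaussianReal 0 1).real (Ioc s (s + 1)) := by
        rw [measureReal_def, gaussianReal_apply_eq_integral 0 one_ne_zero,
          ENNReal.toReal_ofReal (setIntegral_nonneg measurableSet_Ioc
            fun x _ => gaussianPDFReal_nonneg 0 1 x)]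
    _ ≤ (gaussianReal 0 1).real {x | s < |x|} :=
        measureReal_mono fun x hx => hx.1.trans_le (le_abs_self x)

lemma tendsto_gaussianReal_real_abs_gt :
    Tendsto (fun s => (gaussianReal 0 1).real {x | s < |x|}) atTop (𝓝 0) := by
  have hexp : Tendsto (fun s : ℝ => 2 * exp (-s ^ 2 / 2)) atTop (𝓝 0) := by
    have : Tendsto (fun s : ℝ => -s ^ 2 / 2) atTop atBot :=
      (tendsto_neg_atTop_atBot.comp (tendsto_pow_atTop two_ne_zero)).atBot_div_const two_pos
    simpa using (tendsto_exp_atBot.comp this).const_mul 2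
  refine squeeze_zero' (Eventually.of_forall fun s => measureReal_nonneg) ?_ hexp
  filter_upwards [eventually_ge_atTop 0] with s hs using gaussianReal_real_abs_gt_le hs

lemma tendsto_gaussianReal_real_abs_gt_div {M : ℝ} (hM : 1 < M) :
    Tendsto (fun t => (gaussianReal 0 1).real {x | M * t < |x|} /
      (gaussianReal 0 1).real {x | t < |x|}) atTop (𝓝 0) := by
  have hexponent : Tendsto (fun t : ℝ => ((t + 1) ^ 2 - (M * t) ^ 2) / 2) atTop atBot := by
    have h₁ : Tendsto (fun t : ℝ => (1 - M) * t + 1) atTop atBot :=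
      tendsto_atBot_add_const_right _ 1 (tendsto_id.const_mul_atTop_of_neg (by linarith))
    have h₂ : Tendsto (fun t : ℝ => (1 + M) * t + 1) atTop atTop :=
      tendsto_atTop_add_const_right _ 1 (tendsto_id.const_mul_atTop (by linarith))
    refine ((h₁.atBot_mul_atTop₀ h₂).atBot_div_const two_pos).congr fun t => ?_
    ring
  have hbound : Tendsto (fun t : ℝ => 2 * √(2 * π) * exp (((t + 1) ^ 2 - (M * t) ^ 2) / 2))
      atTop (𝓝 0) := by
    simpa using (tendsto_exp_atBot.comp hexponent).const_mul (2 * √(2 * π))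
  refine squeeze_zero' (Eventually.of_forall fun t =>
    div_nonneg measureReal_nonneg measureReal_nonneg) ?_ hbound
  filter_upwards [eventually_ge_atTop 0] with t ht
  calc (gaussianReal 0 1).real {x | M * t < |x|} / (gaussianReal 0 1).real {x | t < |x|}
      ≤ 2 * exp (-(M * t) ^ 2 / 2) / gaussianPDFReal 0 1 (t + 1) :=
        div_le_div₀ (by positivity) (gaussianReal_real_abs_gt_le (by positivity))
          (gaussianPDFReal_pos 0 1 _ one_ne_zero) (gaussianPDFReal_le_gaussianReal_real_abs_gt ht)
    _ = 2 * √(2 * π) * exp (((t + 1) ^ 2 - (M * t) ^ 2) / 2) := by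
        rw [gaussianPDFReal_def, show ((t + 1) ^ 2 - (M * t) ^ 2) / 2
          = -(M * t) ^ 2 / 2 - (-(t + 1) ^ 2 / 2) by ring, exp_sub]
        simp only [sub_zero, NNReal.coe_one, mul_one]
        field_simp

section QuasiAsymptoticIndependence

variable {Ω : Type*} {X Y Z : Ω → ℝ} {a M : ℝ}

lemma setOf_abs_gt_and_subset (ha : 0 ≤ a) (hY : ∀ ω, |Y ω| ≤ a * |X ω| + |Z ω|) (t : ℝ) :
    {ω | t < |X ω| ∧ t < |Y ω|} ⊆
      {ω | M * t < |X ω|} ∪ ({ω | t < |X ω|} ∩ {ω | (1 - a * M) * t < |Z ω|}) := by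
  rintro ω ⟨hXt, hYt⟩
  by_cases hXM : M * t < |X ω|
  · exact Or.inl hXM
  · refine Or.inr ⟨hXt, ?_⟩
    have := mul_le_mul_of_nonneg_left (not_lt.mp hXM) ha
    show (1 - a * M) * t < |Z ω|
    linarith [hY ω]

variable [MeasurableSpace Ω] {μ : Measure Ω}

lemma measureReal_abs_gt_eq_of_map_eq {ν : Measure ℝ} [NeZero ν] (hX : μ.map X = ν) (s : ℝ) :
    μ.real {ω | s < |X ω|} = ν.real {x | s < |x|} := by
  rw [← hX, map_measureReal_apply_of_aemeasurable (aemeasurable_of_map_neZero (hX ▸ ‹_›))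
    (measurableSet_lt measurable_const measurable_abs)]
  rfl

lemma measureReal_abs_gt_and_le [IsFiniteMeasure μ] (hindep : IndepFun X Z μ) (ha : 0 ≤ a)
    (hY : ∀ ω, |Y ω| ≤ a * |X ω| + |Z ω|) (t : ℝ) :
    μ.real {ω | t < |X ω| ∧ t < |Y ω|} ≤
      μ.real {ω | M * t < |X ω|} +
        μ.real {ω | t < |X ω|} * μ.real {ω | (1 - a * M) * t < |Z ω|} := by
  have hprod : μ.real ({ω | t < |X ω|} ∩ {ω | (1 - a * M) * t < |Z ω|}) =
      μ.real {ω | t < |X ω|} * μ.real {ω | (1 - a * M) * t < |Z ω|} := by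
    simp only [measureReal_def, ← ENNReal.toReal_mul]
    congr 1
    exact hindep.measure_inter_preimage_eq_mul _ _
      (measurableSet_lt measurable_const measurable_abs)
      (measurableSet_lt measurable_const measurable_abs)
  calc μ.real {ω | t < |X ω| ∧ t < |Y ω|}
      ≤ μ.real ({ω | M * t < |X ω|} ∪
          ({ω | t < |X ω|} ∩ {ω | (1 - a * M) * t < |Z ω|})) :=
        measureReal_mono (setOf_abs_gt_and_subset ha hY t)
    _ ≤ _ := hprod ▸ measureReal_union_le _ _

lemma div_le_div_add_of_le_add_mul {x c p q : ℝ} (hx : x ≤ c + p * q) (hp : 0 ≤ p)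
    (hq : 0 ≤ q) : x / p ≤ c / p + q := by
  rcases hp.eq_or_lt with rfl | hp
  · simpa using hq
  · calc x / p ≤ (c + p * q) / p := div_le_div_of_nonneg_right hx hp.le
      _ = c / p + q := by field_simp

theorem tendsto_measureReal_abs_gt_and_div [IsFiniteMeasure μ] (hindep : IndepFun X Z μ)
    (ha : 0 ≤ a) (haM : a * M < 1) (hY : ∀ ω, |Y ω| ≤ a * |X ω| + |Z ω|)
    (hX : Tendsto (fun t => μ.real {ω | M * t < |X ω|} / μ.real {ω | t < |X ω|}) atTop (𝓝 0))
    (hZ : Tendsto (fun s => μ.real {ω | s < |Z ω|}) atTop (𝓝 0)) :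
    Tendsto (fun t => μ.real {ω | t < |X ω| ∧ t < |Y ω|} / μ.real {ω | t < |X ω|})
      atTop (𝓝 0) := by
  have hZ' := hZ.comp (tendsto_id.const_mul_atTop (sub_pos.mpr haM))
  refine squeeze_zero (fun t => div_nonneg measureReal_nonneg measureReal_nonneg)
    (fun t => div_le_div_add_of_le_add_mul (measureReal_abs_gt_and_le (M := M) hindep ha hY t)
      measureReal_nonneg measureReal_nonneg) ?_
  simpa using hX.add hZ'

end QuasiAsymptoticIndependence

lemma abs_mul_add_sqrt_one_sub_sq_mul_le (ρ x z : ℝ) :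
    |ρ * x + √(1 - ρ ^ 2) * z| ≤ |ρ| * |x| + |z| :=
  calc |ρ * x + √(1 - ρ ^ 2) * z|
      ≤ |ρ| * |x| + √(1 - ρ ^ 2) * |z| := by
        simpa only [abs_mul, abs_of_nonneg (sqrt_nonneg _)] using
          abs_add_le (ρ * x) (√(1 - ρ ^ 2) * z)
    _ ≤ |ρ| * |x| + |z| := by
        gcongr
        exact mul_le_of_le_one_left (abs_nonneg z) (sqrt_le_one.mpr (by nlinarith))

/-- For a bivariate normal pair `(X, Y)` with standard normal marginals and correlation
`ρ` with `|ρ| ≤ ρ₀ < 1`, the absolute values are quasi-asymptotically independent: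
`P(|Y| > t | |X| > t) → 0` as `t → ∞`. -/
theorem abs_bivariate_normal_quasi_asymp_indep
    {Ω : Type*} [MeasurableSpace Ω] (μ : Measure Ω) [IsProbabilityMeasure μ]
    (ρ ρ₀ : ℝ) (hρ : |ρ| ≤ ρ₀) (hρ₀1 : ρ₀ < 1)
    (X Z Y : Ω → ℝ)
    (hX : Measure.map X μ = gaussianReal 0 1)
    (hZ : Measure.map Z μ = gaussianReal 0 1)
    (hindep : IndepFun X Z μ)
    (hY : ∀ ω, Y ω = ρ * X ω + Real.sqrt (1 - ρ ^ 2) * Z ω) :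
    Tendsto (fun t : ℝ =>
        (μ {ω | |X ω| > t ∧ |Y ω| > t}).toReal / (μ {ω | |X ω| > t}).toReal)
      atTop (𝓝 0) := by
  have hρ1 : |ρ| < 1 := hρ.trans_lt hρ₀1
  obtain ⟨M, hM, hρM⟩ : ∃ M, 1 < M ∧ |ρ| * M < 1 :=
    ⟨2 / (1 + |ρ|), (one_lt_div (by positivity)).mpr (by linarith),
      by rw [mul_div_assoc', div_lt_one (by positivity)]; linarith⟩
  have hXratio := tendsto_gaussianReal_real_abs_gt_div hM
  have hZtail := tendsto_gaussianReal_real_abs_gt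
  simp only [← measureReal_abs_gt_eq_of_map_eq hX] at hXratio
  simp only [← measureReal_abs_gt_eq_of_map_eq hZ] at hZtail
  simpa only [measureReal_def, gt_iff_lt] using
    tendsto_measureReal_abs_gt_and_div hindep (abs_nonneg ρ) hρM
      (fun ω => hY ω ▸ abs_mul_add_sqrt_one_sub_sq_mul_le ρ (X ω) (Z ω)) hXratio hZtail
end

section
/- Let Z ~ N(μ, 1) with μ ∈ ℝ, and let F be a distribution function regularly varying with tail index γ on (0,∞) with continuous strictly increasing F. Then X = Q_F(Φ(Z)) has a regularly varying tail with the same index γ: for all y > 0, lim_{x→∞} P(X > xy)/P(X > x) = y^{−γ}. -/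
/-!
Write `Φ̄ = 1 - Φ` and `b = Φ⁻¹ ∘ F`. Since `F` is continuous and strictly increasing,
`F (X) = Φ (Z)`, so `{X > t} = {Z > b t}`; hence `P(X > t) = Φ̄(b t - m)` while
`1 - F t = Φ̄(b t)`, and it suffices to show that `Φ̄(v - m)/Φ̄(u - m)` has the same limit
`L > 0` as `Φ̄(v)/Φ̄(u)` when `u, v → ∞`. Mills' ratio `Φ̄(t) ~ φ(t)/t` gives
`log Φ̄(t) = -(t²/2 + log t) + const + o(1)`. As `t²/2 + log t` grows with slope at least `t`,
a bounded log-ratio forces `v - u → 0`, and then the shift by `m` changes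
`log Φ̄(v) - log Φ̄(u)` only by `m (v - u) + o(1) → 0`.
-/

open MeasureTheory ProbabilityTheory Filter Topology Set Real

noncomputable def gaussTail (t : ℝ) : ℝ := ∫ x in Ioi t, exp (-x ^ 2 / 2)

lemma integrable_exp_neg_sq_div_two : Integrable fun x : ℝ => exp (-x ^ 2 / 2) := by
  simpa [neg_div, div_eq_inv_mul] using integrable_exp_neg_mul_sq (b := 2⁻¹) (by norm_num)

lemma gaussTail_eq_sub_intervalIntegral (t : ℝ) :
    gaussTail t = gaussTail 0 - ∫ x in (0)..t, exp (-x ^ 2 / 2) := by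
  rw [eq_sub_iff_add_eq, add_comm, gaussTail, gaussTail]
  exact intervalIntegral.integral_interval_add_Ioi integrable_exp_neg_sq_div_two.integrableOn
    integrable_exp_neg_sq_div_two.integrableOn

lemma hasDerivAt_gaussTail (t : ℝ) : HasDerivAt gaussTail (-exp (-t ^ 2 / 2)) t := by
  have hI : HasDerivAt (fun s => ∫ x in (0)..s, exp (-x ^ 2 / 2)) (exp (-t ^ 2 / 2)) t :=
    intervalIntegral.integral_hasDerivAt_right integrable_exp_neg_sq_div_two.intervalIntegrable
      integrable_exp_neg_sq_div_two.aestronglyMeasurable.stronglyMeasurableAtFilter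
      (by fun_prop)
  rw [funext gaussTail_eq_sub_intervalIntegral]
  exact hI.const_sub _

lemma gaussTail_pos (t : ℝ) : 0 < gaussTail t := by
  rw [gaussTail, setIntegral_pos_iff_support_of_nonneg_ae
    (ae_of_all _ fun x => (exp_pos _).le) integrable_exp_neg_sq_div_two.integrableOn]
  simp [Function.support, (exp_pos _).ne']

lemma strictAnti_gaussTail : StrictAnti gaussTail :=
  strictAnti_of_hasDerivAt_neg hasDerivAt_gaussTail fun _ => neg_neg_of_pos (exp_pos _)

lemma continuous_gaussTail : Continuous gaussTail :=
  continuous_iff_continuousAt.2 fun t => (hasDerivAt_gaussTail t).continuousAt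

lemma tendsto_gaussTail_atTop : Tendsto gaussTail atTop (𝓝 0) := by
  have h : Tendsto (fun t => gaussTail 0 - ∫ x in (0)..t, exp (-x ^ 2 / 2)) atTop
      (𝓝 (gaussTail 0 - gaussTail 0)) :=
    (intervalIntegral_tendsto_integral_Ioi 0
      integrable_exp_neg_sq_div_two.integrableOn tendsto_id).const_sub _
  rw [sub_self] at h
  exact h.congr fun t => (gaussTail_eq_sub_intervalIntegral t).symm

lemma hasDerivAt_exp_neg_sq_div_two_div {t : ℝ} (ht : t ≠ 0) :
    HasDerivAt (fun s => exp (-s ^ 2 / 2) / s) (-(exp (-t ^ 2 / 2) * (1 + (t ^ 2)⁻¹))) t := by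
  have h : HasDerivAt (fun s => -s ^ 2 / 2) (-t) t := by
    simpa [neg_div] using ((hasDerivAt_pow 2 t).div_const 2).fun_neg
  refine (h.exp.fun_div (hasDerivAt_id' t) ht).congr_deriv ?_
  field_simp
  ring

lemma tendsto_exp_neg_sq_div_two_atTop :
    Tendsto (fun t : ℝ => exp (-t ^ 2 / 2)) atTop (𝓝 0) := by
  have h : Tendsto (fun t : ℝ => -t ^ 2 / 2) atTop atBot := by
    simpa [neg_div] using (tendsto_pow_atTop two_ne_zero).atTop_div_const (zero_lt_two' ℝ)
  exact tendsto_exp_atBot.comp h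

lemma tendsto_gaussTail_div_atTop :
    Tendsto (fun t => gaussTail t / (exp (-t ^ 2 / 2) / t)) atTop (𝓝 1) := by
  have hratio : Tendsto (fun t : ℝ => (1 + (t ^ 2)⁻¹)⁻¹) atTop (𝓝 1) := by
    simpa using ((tendsto_inv_atTop_zero.comp (tendsto_pow_atTop (α := ℝ) two_ne_zero)).const_add
      1).inv₀ (by norm_num)
  refine HasDerivAt.lhopital_zero_atTop (.of_forall hasDerivAt_gaussTail)
    ((eventually_ne_atTop 0).mono fun t ht => hasDerivAt_exp_neg_sq_div_two_div ht)
    (.of_forall fun t => neg_ne_zero.2 (by positivity)) tendsto_gaussTail_atTop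
    (by simpa [div_eq_mul_inv] using tendsto_exp_neg_sq_div_two_atTop.mul tendsto_inv_atTop_zero)
    (hratio.congr' ?_)
  filter_upwards with t
  field_simp

lemma tendsto_log_gaussTail_add_sq_div_two_add_log :
    Tendsto (fun t => log (gaussTail t) + (t ^ 2 / 2 + log t)) atTop (𝓝 0) := by
  have h := (continuousAt_log one_ne_zero).tendsto.comp tendsto_gaussTail_div_atTop
  rw [log_one] at h
  refine h.congr' ?_
  filter_upwards [eventually_gt_atTop 0] with t ht
  rw [Function.comp_apply, log_div (gaussTail_pos t).ne' (by positivity),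
    log_div (exp_pos _).ne' ht.ne', log_exp]
  ring

lemma one_sub_cdf_eq_measureReal_Ioi (ν : Measure ℝ) [IsProbabilityMeasure ν] (z : ℝ) :
    1 - cdf ν z = ν.real (Ioi z) := by
  rw [cdf_eq_real, ← compl_Iic, probReal_compl_eq_one_sub measurableSet_Iic]

lemma measureReal_Ioi_gaussianReal (m : ℝ) (v : NNReal) (a : ℝ) :
    (gaussianReal m v).real (Ioi a) = (gaussianReal 0 v).real (Ioi (a - m)) := by
  rw [← zero_add m, ← gaussianReal_map_add_const,
    map_measureReal_apply (measurable_add_const m) measurableSet_Ioi]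
  simp [preimage_add_const_Ioi]

lemma one_sub_cdf_gaussianReal (z : ℝ) :
    1 - cdf (gaussianReal 0 1) z = (√(2 * π))⁻¹ * gaussTail z := by
  rw [one_sub_cdf_eq_measureReal_Ioi, measureReal_def,
    gaussianReal_apply_eq_integral 0 one_ne_zero, ENNReal.toReal_ofReal
      (setIntegral_nonneg measurableSet_Ioi fun x _ => gaussianPDFReal_nonneg 0 1 x),
    gaussTail, ← integral_const_mul]
  simp [gaussianPDFReal]

lemma cdf_gaussianReal_lt_one (z : ℝ) : cdf (gaussianReal 0 1) z < 1 :=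
  sub_pos.1 (by rw [one_sub_cdf_gaussianReal]; exact mul_pos (by positivity) (gaussTail_pos z))

lemma strictMono_cdf_gaussianReal : StrictMono (cdf (gaussianReal 0 1)) := fun a b hab => by
  have h : 1 - cdf (gaussianReal 0 1) b < 1 - cdf (gaussianReal 0 1) a := by
    rw [one_sub_cdf_gaussianReal, one_sub_cdf_gaussianReal]
    exact mul_lt_mul_of_pos_left (strictAnti_gaussTail hab) (by positivity)
  linarith

lemma continuous_cdf_gaussianReal : Continuous (cdf (gaussianReal 0 1)) := by
  have h : cdf (gaussianReal 0 1) = fun z => 1 - (√(2 * π))⁻¹ * gaussTail z := by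
    funext z; rw [← one_sub_cdf_gaussianReal, sub_sub_cancel]
  rw [h]
  exact continuous_const.sub (continuous_const.mul continuous_gaussTail)

lemma abs_sub_mul_le_abs_sub_sq_div_two_add_log {u v : ℝ} (hu : 0 < u) (hv : 0 < v) :
    |v - u| * ((u + v) / 2) ≤ |(v ^ 2 / 2 + log v) - (u ^ 2 / 2 + log u)| := by
  wlog h : u ≤ v generalizing u v
  · rw [abs_sub_comm, abs_sub_comm (v ^ 2 / 2 + _), add_comm u]
    exact this hv hu (le_of_not_ge h)
  have hlog := log_le_log hu h
  rw [abs_of_nonneg (sub_nonneg.2 h), abs_of_nonneg (by nlinarith)]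
  nlinarith

lemma tendsto_sub_comp_sub_const_of_tendsto_add_sq_div_two_add_log {ψ : ℝ → ℝ} {a : ℝ}
    (hψ : Tendsto (fun t => ψ t + (t ^ 2 / 2 + log t)) atTop (𝓝 a))
    {u v : ℝ → ℝ} (hu : Tendsto u atTop atTop) (hv : Tendsto v atTop atTop) {c : ℝ}
    (h : Tendsto (fun x => ψ (v x) - ψ (u x)) atTop (𝓝 c)) (m : ℝ) :
    Tendsto (fun x => ψ (v x - m) - ψ (u x - m)) atTop (𝓝 c) := by
  set q : ℝ → ℝ := fun t => t ^ 2 / 2 + log t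
  have hR {w : ℝ → ℝ} (hw : Tendsto w atTop atTop) :
      Tendsto (fun x => ψ (w x) + q (w x)) atTop (𝓝 a) := hψ.comp hw
  have hq : Tendsto (fun x => q (v x) - q (u x)) atTop (𝓝 (-c)) := by
    have := ((hR hv).sub (hR hu)).sub h
    rw [sub_self, zero_sub] at this
    exact this.congr fun x => by ring
  have hvu : Tendsto (fun x => v x - u x) atTop (𝓝 0) := by
    have hsum : Tendsto (fun x => (u x + v x) / 2) atTop atTop :=
      (hu.atTop_add_atTop hv).atTop_div_const two_pos
    refine squeeze_zero_norm' ?_ ((tendsto_const_nhds (x := |c| + 1)).div_atTop hsum)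
    filter_upwards [hu.eventually_gt_atTop 0, hv.eventually_gt_atTop 0,
      hsum.eventually_gt_atTop 0, hq.abs.eventually (gt_mem_nhds (show |-c| < |c| + 1 by simp))]
      with x hux hvx hs hqx
    rw [norm_eq_abs, le_div_iff₀ hs]
    exact (abs_sub_mul_le_abs_sub_sq_div_two_add_log hux hvx).trans hqx.le
  have hlog {w : ℝ → ℝ} (hw : Tendsto w atTop atTop) :
      Tendsto (fun x => log (w x - m) - log (w x)) atTop (𝓝 0) := by
    simpa [sub_eq_add_neg, Function.comp_def] using (tendsto_log_comp_add_sub_log (-m)).comp hw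
  have hvm := tendsto_atTop_add_const_right atTop (-m) hv
  have hum := tendsto_atTop_add_const_right atTop (-m) hu
  simp only [← sub_eq_add_neg] at hvm hum
  have := (((((hR hvm).sub (hR hum)).sub hq).add (hvu.const_mul m)).sub (hlog hv)).add (hlog hu)
  -- `(v - m)²/2 - (u - m)²/2 = (v² - u²)/2 - m (v - u)`
  convert this using 2
  · simp only [q]; ring
  · ring

lemma tendsto_one_sub_cdf_gaussianReal_div_comp_sub_const {u v : ℝ → ℝ}
    (hu : Tendsto u atTop atTop) (hv : Tendsto v atTop atTop) {L : ℝ} (hL : 0 < L)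
    (h : Tendsto (fun x => (1 - cdf (gaussianReal 0 1) (v x)) / (1 - cdf (gaussianReal 0 1) (u x)))
      atTop (𝓝 L)) (m : ℝ) :
    Tendsto (fun x => (1 - cdf (gaussianReal 0 1) (v x - m)) /
      (1 - cdf (gaussianReal 0 1) (u x - m))) atTop (𝓝 L) := by
  have hpos (z : ℝ) : 0 < 1 - cdf (gaussianReal 0 1) z := sub_pos.2 (cdf_gaussianReal_lt_one z)
  have hψ : Tendsto (fun t => log (1 - cdf (gaussianReal 0 1) t) + (t ^ 2 / 2 + log t)) atTop
      (𝓝 (log (√(2 * π))⁻¹ + 0)) := by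
    refine (tendsto_log_gaussTail_add_sq_div_two_add_log.const_add _).congr fun t => ?_
    rw [one_sub_cdf_gaussianReal, log_mul (by positivity) (gaussTail_pos t).ne', add_assoc]
  have hlog : Tendsto (fun x => log (1 - cdf (gaussianReal 0 1) (v x)) -
      log (1 - cdf (gaussianReal 0 1) (u x))) atTop (𝓝 (log L)) :=
    ((continuousAt_log hL.ne').tendsto.comp h).congr fun x =>
      log_div (hpos _).ne' (hpos _).ne'
  have h_exp := (continuous_exp.tendsto _).comp
    (tendsto_sub_comp_sub_const_of_tendsto_add_sq_div_two_add_log hψ hu hv hlog m)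
  rw [exp_log hL] at h_exp
  refine h_exp.congr fun x => ?_
  rw [Function.comp_apply, exp_sub, exp_log (hpos _), exp_log (hpos _)]

lemma range_eq_Ioo_of_tendsto {F : ℝ → ℝ} (hF_cont : Continuous F) (hF_mono : StrictMono F)
    {a b : ℝ} (hF_bot : Tendsto F atBot (𝓝 a)) (hF_top : Tendsto F atTop (𝓝 b)) :
    range F = Ioo a b := by
  refine Subset.antisymm (range_subset_iff.2 fun x => ⟨?_, ?_⟩) fun p hp => ?_
  · exact (hF_mono.monotone.le_of_tendsto hF_bot (x - 1)).trans_lt (hF_mono (sub_one_lt x))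
  · exact (hF_mono (lt_add_one x)).trans_le (hF_mono.monotone.ge_of_tendsto hF_top (x + 1))
  · exact mem_range_of_exists_le_of_exists_ge hF_cont
      ((hF_bot.eventually (gt_mem_nhds hp.1)).exists.imp fun _ => le_of_lt)
      ((hF_top.eventually (lt_mem_nhds hp.2)).exists.imp fun _ => le_of_lt)

lemma apply_sInf_setOf_le_apply {F : ℝ → ℝ} (hF : StrictMono F) {p : ℝ}
    (hp : p ∈ range F) :
    F (sInf {z | p ≤ F z}) = p := by
  obtain ⟨x, rfl⟩ := hp
  simp only [hF.le_iff_le]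
  exact congrArg F csInf_Ici

lemma tendsto_atTop_of_strictMono_comp {α : Type*} {l : Filter α} {g : ℝ → ℝ}
    (hg : StrictMono g) {c : ℝ} (hgc : ∀ z, g z < c) {b : α → ℝ}
    (h : Tendsto (g ∘ b) l (𝓝 c)) : Tendsto b l atTop :=
  tendsto_atTop.2 fun M =>
    (h.eventually (lt_mem_nhds (hgc M))).mono fun _ hx => (hg.lt_iff_lt.1 hx).le

theorem transformed_shifted_gaussian_regularly_varying_general
    {Ω : Type*} [MeasurableSpace Ω] (μ : Measure Ω) [IsProbabilityMeasure μ]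
    (m : ℝ) (Z : Ω → ℝ) (hZ_meas : Measurable Z)
    (hZ : Measure.map Z μ = gaussianReal m 1)
    (γ : ℝ)
    (F : ℝ → ℝ) (hF_cont : Continuous F) (hF_mono : StrictMono F)
    (hF_bot : Tendsto F atBot (𝓝 0)) (hF_top : Tendsto F atTop (𝓝 1))
    (hRV : ∀ y : ℝ, 0 < y →
      Tendsto (fun x : ℝ => (1 - F (x * y)) / (1 - F x)) atTop (𝓝 (y ^ (-γ))))
    (X : Ω → ℝ)
    (hX : ∀ ω, X ω = sInf {z : ℝ | cdf (gaussianReal 0 1) (Z ω) ≤ F z}) :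
    ∀ y : ℝ, 0 < y →
      Tendsto (fun x : ℝ =>
          (μ {ω | X ω > x * y}).toReal / (μ {ω | X ω > x}).toReal)
        atTop (𝓝 (y ^ (-γ))) := by
  have hF_range := range_eq_Ioo_of_tendsto hF_cont hF_mono hF_bot hF_top
  have hΦ_range := range_eq_Ioo_of_tendsto continuous_cdf_gaussianReal
    strictMono_cdf_gaussianReal (tendsto_cdf_atBot _) (tendsto_cdf_atTop _)
  set b : ℝ → ℝ := fun t => sInf {z | F t ≤ cdf (gaussianReal 0 1) z}
  have hb (t : ℝ) : cdf (gaussianReal 0 1) (b t) = F t :=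
    apply_sInf_setOf_le_apply strictMono_cdf_gaussianReal
      (hΦ_range ▸ hF_range ▸ mem_range_self t)
  have hFX (ω : Ω) : F (X ω) = cdf (gaussianReal 0 1) (Z ω) := by
    rw [hX]
    exact apply_sInf_setOf_le_apply hF_mono (hF_range ▸ hΦ_range ▸ mem_range_self (Z ω))
  have hX_gt (t : ℝ) : {ω | X ω > t} = Z ⁻¹' Ioi (b t) := by
    ext ω
    rw [mem_ofPred_eq, gt_iff_lt, ← hF_mono.lt_iff_lt, hFX, ← hb,
      strictMono_cdf_gaussianReal.lt_iff_lt, mem_preimage, mem_Ioi]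
  have hμ_gt (t : ℝ) : (μ {ω | X ω > t}).toReal = 1 - cdf (gaussianReal 0 1) (b t - m) := by
    rw [hX_gt, ← Measure.map_apply hZ_meas measurableSet_Ioi, hZ, ← measureReal_def,
      measureReal_Ioi_gaussianReal, one_sub_cdf_eq_measureReal_Ioi]
  have hb_top : Tendsto b atTop atTop :=
    tendsto_atTop_of_strictMono_comp strictMono_cdf_gaussianReal cdf_gaussianReal_lt_one
      (by simpa only [Function.comp_def, hb] using hF_top)
  intro y hy
  refine (tendsto_one_sub_cdf_gaussianReal_div_comp_sub_const hb_top
    (hb_top.comp (tendsto_id.atTop_mul_const hy)) (rpow_pos_of_pos hy _) ?_ m).congr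
    fun x => by simp only [hμ_gt, Function.comp_apply, id]
  simpa only [Function.comp_apply, id, hb] using hRV y hy

/-- If `Z ~ N(m, 1)` and `F` is a continuous strictly increasing distribution function
regularly varying with tail index `γ`, then `X = Q_F(Φ(Z))` has a regularly varying tail
with the same index: `P(X > xy)/P(X > x) → y^{−γ}` as `x → ∞`, for every `y > 0`. -/
theorem transformed_shifted_gaussian_regularly_varying
    {Ω : Type*} [MeasurableSpace Ω] (μ : Measure Ω) [IsProbabilityMeasure μ]
    (m : ℝ) (Z : Ω → ℝ) (hZ_meas : Measurable Z)
    (hZ : Measure.map Z μ = gaussianReal m 1)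
    (γ : ℝ) (hγ : 0 < γ)
    (F : ℝ → ℝ) (hF_cont : Continuous F) (hF_mono : StrictMono F)
    (hF_bot : Tendsto F atBot (𝓝 0)) (hF_top : Tendsto F atTop (𝓝 1))
    (hF_lt_one : ∀ x : ℝ, F x < 1)
    (hRV : ∀ y : ℝ, 0 < y →
      Tendsto (fun x : ℝ => (1 - F (x * y)) / (1 - F x)) atTop (𝓝 (y ^ (-γ))))
    (X : Ω → ℝ)
    (hX : ∀ ω, X ω = sInf {z : ℝ | cdf (gaussianReal 0 1) (Z ω) ≤ F z}) :
    ∀ y : ℝ, 0 < y →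
      Tendsto (fun x : ℝ =>
          (μ {ω | X ω > x * y}).toReal / (μ {ω | X ω > x}).toReal)
        atTop (𝓝 (y ^ (-γ))) :=
  transformed_shifted_gaussian_regularly_varying_general μ m Z hZ_meas hZ γ F hF_cont hF_mono hF_bot
    hF_top hRV X hX
end

section
/- If X₁ = X₂ = ... = Xₙ almost surely with common distribution F regularly varying of index γ, and ωᵢ > 0, then the weighted combination test with nominal level α has asymptotic type-I error lim_{α→0⁺} P(∑ᵢ ωᵢXᵢ > Q_F(1 − α/κ))/α = (∑ᵢ ωᵢ)^γ / ∑ᵢ ωᵢ^γ, where κ = ∑ᵢ ωᵢ^γ. In particular, if all ωᵢ = 1 the limit equals n^{γ−1}. -/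
open MeasureTheory Filter Topology

/-- If `X₁ = ... = Xₙ` almost surely, with common distribution `F` regularly varying of
index `γ > 0`, then the weighted heavy-tailed combination test with weights `ωᵢ > 0` and
`κ = ∑ᵢ ωᵢ^γ` has asymptotic type-I error
`lim_{α→0⁺} P(∑ᵢ ωᵢXᵢ > Q_F(1 − α/κ))/α = (∑ᵢ ωᵢ)^γ / ∑ᵢ ωᵢ^γ`.
In particular, with all weights equal to 1, the limit is `n^{γ−1}`. -/
theorem combination_test_perfect_correlation_limit
    {Ω : Type*} [MeasurableSpace Ω] (μ : Measure Ω) [IsProbabilityMeasure μ]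
    {n : ℕ} (hn : 1 ≤ n) (X : Fin n → Ω → ℝ)
    (heq : ∀ i j : Fin n, ∀ᵐ ω ∂μ, X i ω = X j ω)
    (γ : ℝ) (hγ : 0 < γ) (F : ℝ → ℝ)
    (hF_cont : Continuous F) (hF_mono : StrictMono F)
    (hF_lt_one : ∀ x : ℝ, F x < 1)
    (hRV : ∀ y : ℝ, 0 < y →
      Tendsto (fun x : ℝ => (1 - F (x * y)) / (1 - F x)) atTop (𝓝 (y ^ (-γ))))
    (htail : ∀ i, ∀ x : ℝ, (μ {ω | X i ω > x}).toReal = 1 - F x)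
    (w : Fin n → ℝ) (hw : ∀ i, 0 < w i) :
    (Tendsto (fun α : ℝ =>
        (μ {ω | (∑ i, w i * X i ω) >
            sInf {z : ℝ | 1 - α / (∑ i, w i ^ γ) ≤ F z}}).toReal / α)
      (𝓝[>] (0 : ℝ)) (𝓝 ((∑ i, w i) ^ γ / (∑ i, w i ^ γ)))) ∧
    ((∀ i, w i = 1) → (∑ i, w i) ^ γ / (∑ i, w i ^ γ) = (n : ℝ) ^ (γ - 1)) := by
  have hi0 : (0 : ℕ) < n := hn
  set i0 : Fin n := ⟨0, hi0⟩ with hi0def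
  set S : ℝ := ∑ i, w i with hSdef
  set κ : ℝ := ∑ i, w i ^ γ with hκdef
  have hSpos : 0 < S := Finset.sum_pos (fun i _ => hw i) ⟨i0, Finset.mem_univ _⟩
  have hκpos : 0 < κ :=
    Finset.sum_pos (fun i _ => Real.rpow_pos_of_pos (hw i) γ) ⟨i0, Finset.mem_univ _⟩
  -- F tends to 1 at infinity
  have hFmono : Monotone F := hF_mono.monotone
  have hbdd : BddAbove (Set.range F) := ⟨1, by rintro _ ⟨x, rfl⟩; exact (hF_lt_one x).le⟩
  have htend : Tendsto F atTop (𝓝 (⨆ x, F x)) := tendsto_atTop_ciSup hFmono hbdd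
  have hle1 : (⨆ x, F x) ≤ 1 := ciSup_le fun x => (hF_lt_one x).le
  have hF_top : Tendsto F atTop (𝓝 1) := by
    rcases lt_or_eq_of_le hle1 with hlt | heq1
    · exfalso
      have hne : (1 : ℝ) - (⨆ x, F x) ≠ 0 := sub_ne_zero.mpr (by linarith)
      have hm2 : Tendsto (fun x : ℝ => x * 2) atTop atTop :=
        tendsto_id.atTop_mul_const (by norm_num : (0:ℝ) < 2)
      have h2 : Tendsto (fun x : ℝ => (1 - F (x * 2)) / (1 - F x)) atTop
          (𝓝 ((1 - ⨆ x, F x) / (1 - ⨆ x, F x))) :=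
        (tendsto_const_nhds.sub (htend.comp hm2)).div
          (tendsto_const_nhds.sub htend) hne
      rw [div_self hne] at h2
      have huniq : (1 : ℝ) = 2 ^ (-γ) :=
        tendsto_nhds_unique h2 (hRV 2 (by norm_num))
      have hlt1 : (2 : ℝ) ^ (-γ) < 1 :=
        Real.rpow_lt_one_of_one_lt_of_neg one_lt_two (neg_neg_of_pos hγ)
      linarith
    · rwa [heq1] at htend
  -- for every t < 1, F eventually exceeds t
  have hexist : ∀ t : ℝ, t < 1 → ∃ M : ℝ, t < F M := by
    intro t ht
    have := hF_top.eventually (eventually_gt_nhds ht)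
    rcases this.exists with ⟨M, hM⟩
    exact ⟨M, hM⟩
  -- the quantile function
  set q : ℝ → ℝ := fun α => sInf {z : ℝ | 1 - α / κ ≤ F z} with hqdef
  set ε : ℝ := κ * (1 - F 0) with hεdef
  have hεpos : 0 < ε := mul_pos hκpos (by linarith [hF_lt_one 0])
  -- key property of the quantile
  have hq : ∀ α : ℝ, 0 < α → α < ε → F (q α) = 1 - α / κ := by
    intro α hα hαε
    set t : ℝ := 1 - α / κ with htdef
    have ht1 : t < 1 := by
      have : 0 < α / κ := div_pos hα hκpos
      simp [htdef]; linarith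
    have ht0 : F 0 < t := by
      have : α / κ < 1 - F 0 := (div_lt_iff₀ hκpos).mpr (by rw [hεdef] at hαε; linarith)
      simp [htdef]; linarith
    obtain ⟨M, hM⟩ := hexist t ht1
    have hM0 : 0 < M := hF_mono.lt_iff_lt.mp (lt_trans ht0 hM)
    obtain ⟨z, hz_mem, hz⟩ : ∃ z ∈ Set.Icc (0:ℝ) M, F z = t := by
      have := intermediate_value_Icc hM0.le hF_cont.continuousOn
      have ht_mem : t ∈ Set.Icc (F 0) (F M) := ⟨ht0.le, hM.le⟩
      exact this ht_mem
    have hset : {z' : ℝ | t ≤ F z'} = Set.Ici z := by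
      ext y
      simp only [Set.mem_setOf_eq, Set.mem_Ici]
      rw [← hz]
      exact ⟨fun h => hF_mono.le_iff_le.mp h, fun h => hFmono h⟩
    have : q α = z := by
      show sInf {z' : ℝ | 1 - α / κ ≤ F z'} = z
      rw [show {z' : ℝ | 1 - α / κ ≤ F z'} = {z' : ℝ | t ≤ F z'} from rfl, hset, csInf_Ici]
    rw [this, hz]
  -- q tends to infinity
  have hq_top : Tendsto q (𝓝[>] (0:ℝ)) atTop := by
    rw [tendsto_atTop]
    intro M
    set δ : ℝ := min ε (κ * (1 - F M)) with hδdef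
    have hδpos : 0 < δ :=
      lt_min hεpos (mul_pos hκpos (by linarith [hF_lt_one M]))
    filter_upwards [Ioo_mem_nhdsGT_of_mem (Set.mem_Ico.mpr ⟨le_refl 0, hδpos⟩)] with α hα
    obtain ⟨hα0, hαδ⟩ := hα
    have hFq : F (q α) = 1 - α / κ := hq α hα0 (lt_of_lt_of_le hαδ (min_le_left _ _))
    have h2 : α < κ * (1 - F M) := lt_of_lt_of_le hαδ (min_le_right _ _)
    have : F M < F (q α) := by
      rw [hFq]
      have : α / κ < 1 - F M := (div_lt_iff₀ hκpos).mpr (by linarith [mul_comm κ (1 - F M)])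
      linarith
    exact (hF_mono.lt_iff_lt.mp this).le
  -- second part first
  have hpart2 : (∀ i, w i = 1) → S ^ γ / κ = (n : ℝ) ^ (γ - 1) := by
    intro h1
    have hS1 : S = (n : ℝ) := by
      rw [hSdef]; simp [h1]
    have hκ1 : κ = (n : ℝ) := by
      rw [hκdef]; simp [h1, Real.one_rpow]
    have hnpos : (0 : ℝ) < n := by exact_mod_cast hi0
    rw [hS1, hκ1, Real.rpow_sub hnpos, Real.rpow_one]
  refine ⟨?_, hpart2⟩
  -- a.s. equality of X i with X i0
  have hAS : ∀ᵐ ω ∂μ, ∀ i, X i ω = X i0 ω := ae_all_iff.mpr fun i => heq i i0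
  -- rewrite the measure
  have hmeas : ∀ x : ℝ, (μ {ω | (∑ i, w i * X i ω) > x}).toReal = 1 - F (x / S) := by
    intro x
    have hsets : {ω | (∑ i, w i * X i ω) > x} =ᵐ[μ] {ω | X i0 ω > x / S} := by
      rw [Filter.eventuallyEq_set]
      filter_upwards [hAS] with ω hω
      have hsum : (∑ i, w i * X i ω) = S * X i0 ω := by
        rw [hSdef, Finset.sum_mul]
        exact Finset.sum_congr rfl fun i _ => by rw [hω i]
      rw [hsum]
      constructor
      · intro h
        rw [gt_iff_lt, div_lt_iff₀ hSpos]
        linarith [mul_comm S (X i0 ω)]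
      · intro h
        rw [gt_iff_lt, div_lt_iff₀ hSpos] at h
        linarith [mul_comm S (X i0 ω)]
    rw [measure_congr hsets, htail i0 (x / S)]
  -- the main limit via composition
  have hlim : Tendsto (fun α : ℝ => (1 - F (q α * S⁻¹)) / (1 - F (q α)) / κ)
      (𝓝[>] (0:ℝ)) (𝓝 (S ^ γ / κ)) := by
    have h1 : Tendsto (fun α : ℝ => (1 - F (q α * S⁻¹)) / (1 - F (q α)))
        (𝓝[>] (0:ℝ)) (𝓝 (S⁻¹ ^ (-γ))) :=
      (hRV S⁻¹ (inv_pos.mpr hSpos)).comp hq_top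
    have h2 : (S⁻¹ : ℝ) ^ (-γ) = S ^ γ := by
      rw [Real.inv_rpow hSpos.le, Real.rpow_neg hSpos.le, inv_inv]
    rw [← h2]
    exact h1.div_const κ
  -- eventual equality
  have hcongr : (fun α : ℝ =>
      (μ {ω | (∑ i, w i * X i ω) > sInf {z : ℝ | 1 - α / κ ≤ F z}}).toReal / α)
      =ᶠ[𝓝[>] (0:ℝ)]
      (fun α : ℝ => (1 - F (q α * S⁻¹)) / (1 - F (q α)) / κ) := by
    filter_upwards [Ioo_mem_nhdsGT_of_mem (Set.mem_Ico.mpr ⟨le_refl 0, hεpos⟩)] with α hα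
    obtain ⟨hα0, hαε⟩ := hα
    have hFq : F (q α) = 1 - α / κ := hq α hα0 hαε
    have h1F : 1 - F (q α) = α / κ := by rw [hFq]; ring
    rw [hmeas, div_eq_mul_inv (q α), h1F]
    field_simp
  exact (Tendsto.congr' hcongr.symm hlim)
end

section
/- Suppose X and Y are jointly normal with mean zero, unit variances, and correlation ρ. Define one-sided p-values p₁(X) = 1 − Φ(X) and p₁(Y) = 1 − Φ(Y). Then Cov(p₁(X), p₁(Y)) is zero if ρ = 0, strictly positive if ρ > 0, and strictly negative if ρ < 0. -/
/-!
Write `Y = ρX + √(1 - ρ²)Z`. Since `1 - Φ` flips the sign of both factors, the covariance of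
the p-values equals `Cov(Φ(X), Φ(Y))`, and integrating out `Z` turns it into `Cov_γ(Φ, Λ_ρ)`
with `Λ_ρ(x) = E Φ(ρx + √(1 - ρ²)Z)`. As `Φ` is strictly increasing, `Λ_ρ` is constant,
strictly increasing or strictly decreasing according to the sign of `ρ`. The sign of the
covariance then follows from Chebyshev's correlation inequality in the form
`2 Cov(f, g) = ∬ (f x - f y)(g x - g y)`: for two strictly increasing functions the integrand
is positive off the diagonal, which is null because `γ` has no atoms.
-/

open MeasureTheory ProbabilityTheory Set

local notation "γ" => gaussianReal 0 1
local notation "Φ" => cdf (gaussianReal 0 1)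

section

variable {α β : Type*} [MeasurableSpace α] [MeasurableSpace β]

lemma integral_pos_of_ae_pos {μ : Measure α} [NeZero μ] {f : α → ℝ}
    (hf : ∀ᵐ x ∂μ, 0 < f x) (hfi : Integrable f μ) : 0 < ∫ x, f x ∂μ := by
  have hsupp : Function.support f ∈ ae μ := hf.mono fun _ hx => hx.ne'
  rw [integral_pos_iff_support_of_nonneg_ae (hf.mono fun _ hx => hx.le) hfi,
    measure_congr (ae_eq_univ.2 (mem_ae_iff.1 hsupp))]
  exact Measure.measure_univ_pos.2 (NeZero.ne μ)

lemma strictMono_integral_add {ν : Measure β} [NeZero ν] {F : ℝ → ℝ} (hF : StrictMono F)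
    {g : β → ℝ} (hint : ∀ t, Integrable (fun z => F (t + g z)) ν) :
    StrictMono fun t => ∫ z, F (t + g z) ∂ν := by
  intro s t hst
  have h : 0 < ∫ z, (F (t + g z) - F (s + g z)) ∂ν :=
    integral_pos_of_ae_pos (ae_of_all _ fun z => sub_pos.2 (hF (by linarith)))
      ((hint t).sub (hint s))
  rwa [integral_sub (hint t) (hint s), sub_pos] at h

lemma norm_cdf_le_one (P : Measure ℝ) (x : ℝ) : ‖cdf P x‖ ≤ 1 := by
  rw [Real.norm_eq_abs, abs_le]
  exact ⟨by linarith [cdf_nonneg P x], cdf_le_one P x⟩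

lemma memLp_cdf_comp {μ : Measure α} [IsFiniteMeasure μ] (P : Measure ℝ) {X : α → ℝ}
    (hX : AEMeasurable X μ) (p : ENNReal) : MemLp (fun x => cdf P (X x)) p μ :=
  MemLp.of_bound ((monotone_cdf P).measurable.comp_aemeasurable hX).aestronglyMeasurable 1
    (ae_of_all _ fun x => norm_cdf_le_one P (X x))

lemma strictMono_cdf_of_absolutelyContinuous {P : Measure ℝ} [IsProbabilityMeasure P]
    (hP : volume ≪ P) : StrictMono (cdf P) := by
  intro a b hab
  have hIoc : P (Ioc a b) ≠ 0 := fun h => hab.not_ge (by simpa using hP h)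
  rwa [← measure_cdf P, StieltjesFunction.measure_Ioc, ne_eq, ENNReal.ofReal_eq_zero,
    not_le, sub_pos] at hIoc

lemma integral_prod_sub_mul_sub {μ : Measure α} [IsProbabilityMeasure μ] {f g : α → ℝ}
    (hf : MemLp f 2 μ) (hg : MemLp g 2 μ) :
    ∫ p, (f p.1 - f p.2) * (g p.1 - g p.2) ∂μ.prod μ = 2 * cov[f, g; μ] := by
  have h11 : Integrable (fun p : α × α => f p.1 * g p.1) (μ.prod μ) :=
    (hf.comp_fst μ).integrable_mul (hg.comp_fst μ)
  have h12 : Integrable (fun p : α × α => f p.1 * g p.2) (μ.prod μ) :=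
    (hf.comp_fst μ).integrable_mul (hg.comp_snd μ)
  have h21 : Integrable (fun p : α × α => f p.2 * g p.1) (μ.prod μ) :=
    (hf.comp_snd μ).integrable_mul (hg.comp_fst μ)
  have h22 : Integrable (fun p : α × α => f p.2 * g p.2) (μ.prod μ) :=
    (hf.comp_snd μ).integrable_mul (hg.comp_snd μ)
  have h21_eq : ∫ p, f p.2 * g p.1 ∂μ.prod μ = (∫ x, g x ∂μ) * ∫ x, f x ∂μ := by
    simp_rw [mul_comm (f _)]
    exact integral_prod_mul g f
  simp_rw [sub_mul, mul_sub]
  rw [integral_sub (by exact h11.sub h12) (by exact h21.sub h22), integral_sub h11 h12,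
    integral_sub h21 h22, integral_prod_mul, h21_eq, integral_fun_fst (fun x => f x * g x),
    integral_fun_snd (fun x => f x * g x), covariance_eq_sub hf hg]
  simp only [probReal_univ, one_smul, Pi.mul_apply]
  ring

lemma covariance_pos_of_strictMono {ν : Measure ℝ} [IsProbabilityMeasure ν]
    [NullSingletonClass ν] {f g : ℝ → ℝ} (hf : StrictMono f) (hg : StrictMono g)
    (hf2 : MemLp f 2 ν) (hg2 : MemLp g 2 ν) : 0 < cov[f, g; ν] := by
  have hoff_diag : ∀ᵐ p ∂ν.prod ν, p.1 ≠ p.2 :=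
    (Measure.ae_prod_iff_ae_ae (measurableSet_eq_fun measurable_fst measurable_snd).compl).2
      (ae_of_all _ fun x => (ν.ae_ne x).mono fun _ h => h.symm)
  have hpos : 0 < ∫ p, (f p.1 - f p.2) * (g p.1 - g p.2) ∂ν.prod ν := by
    refine integral_pos_of_ae_pos (hoff_diag.mono fun p hp => ?_) ?_
    · rcases hp.lt_or_gt with h | h
      · exact mul_pos_of_neg_of_neg (sub_neg.2 (hf h)) (sub_neg.2 (hg h))
      · exact mul_pos (sub_pos.2 (hf h)) (sub_pos.2 (hg h))
    · exact ((hf2.comp_fst ν).sub (hf2.comp_snd ν)).integrable_mul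
        ((hg2.comp_fst ν).sub (hg2.comp_snd ν))
  rw [integral_prod_sub_mul_sub hf2 hg2] at hpos
  linarith

lemma covariance_neg_of_strictMono_of_strictAnti {ν : Measure ℝ} [IsProbabilityMeasure ν]
    [NullSingletonClass ν] {f g : ℝ → ℝ} (hf : StrictMono f) (hg : StrictAnti g)
    (hf2 : MemLp f 2 ν) (hg2 : MemLp g 2 ν) : cov[f, g; ν] < 0 := by
  have := covariance_pos_of_strictMono hf (fun _ _ h => neg_lt_neg (hg h)) hf2 hg2.neg
  rwa [covariance_fun_neg_right, neg_pos] at this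

lemma covariance_comp_fst_eq_covariance_integral {μ : Measure α} {ν : Measure β}
    [IsProbabilityMeasure μ] [IsProbabilityMeasure ν] {f : α → ℝ} {h : α × β → ℝ}
    (hf : MemLp f 2 μ) (hh : MemLp h 2 (μ.prod ν)) :
    cov[fun p => f p.1, h; μ.prod ν] = cov[f, fun x => ∫ y, h (x, y) ∂ν; μ] := by
  have hhi := hh.integrable one_le_two
  have hint : Integrable (fun p => (f p.1 - μ[f]) * (h p - (μ.prod ν)[h])) (μ.prod ν) := by
    exact ((hf.comp_fst ν).sub (memLp_const _)).integrable_mul (hh.sub (memLp_const _))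
  have hmean_f : ∫ p, f p.1 ∂μ.prod ν = ∫ x, f x ∂μ := by simp [integral_fun_fst]
  unfold covariance
  rw [hmean_f, ← integral_prod h hhi, integral_prod _ hint]
  refine integral_congr_ae (hhi.prod_right_ae.mono fun x hx => ?_)
  dsimp only
  rw [integral_const_mul, integral_sub hx (integrable_const _), integral_const]
  simp

lemma ProbabilityTheory.IndepFun.covariance_comp_eq_covariance_integral {Ω : Type*}
    [MeasurableSpace Ω] {μ : Measure Ω} [IsProbabilityMeasure μ] {X : Ω → α} {Z : Ω → β}
    (hXZ : IndepFun X Z μ) (hX : AEMeasurable X μ) (hZ : AEMeasurable Z μ) {f : α → ℝ}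
    {h : α × β → ℝ} (hf : MemLp f 2 (μ.map X))
    (hh : MemLp h 2 ((μ.map X).prod (μ.map Z))) :
    cov[fun ω => f (X ω), fun ω => h (X ω, Z ω); μ] =
      cov[f, fun x => ∫ z, h (x, z) ∂μ.map Z; μ.map X] := by
  have := Measure.isProbabilityMeasure_map hX
  have := Measure.isProbabilityMeasure_map hZ
  have hmap := (indepFun_iff_map_prod_eq_prod_map_map hX hZ).1 hXZ
  rw [← covariance_comp_fst_eq_covariance_integral hf hh, ← hmap]
  exact (covariance_map_fun (by rw [hmap]; exact (hf.comp_fst _).1) (by rw [hmap]; exact hh.1)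
    (hX.prodMk hZ)).symm

lemma integral_one_sub_mul_one_sub_sub_eq_covariance {μ : Measure α} [IsProbabilityMeasure μ]
    {U V : α → ℝ} (hU : MemLp U 2 μ) (hV : MemLp V 2 μ) :
    (∫ x, (1 - U x) * (1 - V x) ∂μ) - (∫ x, (1 - U x) ∂μ) * (∫ x, (1 - V x) ∂μ) =
      cov[U, V; μ] := by
  have hU' : MemLp (fun x => 1 - U x) 2 μ := (memLp_const 1).sub hU
  have hV' : MemLp (fun x => 1 - V x) 2 μ := (memLp_const 1).sub hV
  have h := covariance_eq_sub hU' hV'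
  simp only [Pi.mul_apply] at h
  rw [← h, covariance_const_sub_left (hU.integrable one_le_two),
    covariance_const_sub_right (hV.integrable one_le_two), neg_neg]

end

/-- The paper's `Λ`: `smoothedCdf ρ x = E[Φ(Y) | X = x]` when `Y = ρX + √(1 - ρ²)Z`. -/
noncomputable def smoothedCdf (ρ x : ℝ) : ℝ := ∫ z, Φ (ρ * x + √(1 - ρ ^ 2) * z) ∂γ

lemma strictMono_stdGaussian_cdf : StrictMono Φ :=
  strictMono_cdf_of_absolutelyContinuous (gaussianReal_absolutelyContinuous' 0 one_ne_zero)

lemma memLp_smoothedCdf (ρ : ℝ) (p : ENNReal) : MemLp (smoothedCdf ρ) p γ := by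
  have hm : StronglyMeasurable fun q : ℝ × ℝ => Φ (ρ * q.1 + √(1 - ρ ^ 2) * q.2) :=
    ((monotone_cdf γ).measurable.comp (by fun_prop)).stronglyMeasurable
  refine MemLp.of_bound hm.integral_prod_right'.aestronglyMeasurable 1 (ae_of_all _ fun x => ?_)
  simpa [smoothedCdf] using norm_integral_le_of_norm_le_const (μ := γ)
    (ae_of_all _ fun z => norm_cdf_le_one γ (ρ * x + √(1 - ρ ^ 2) * z))

lemma strictMono_integral_stdGaussian_cdf_add (c : ℝ) :
    StrictMono fun t => ∫ z, Φ (t + c * z) ∂γ :=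
  strictMono_integral_add strictMono_stdGaussian_cdf fun _ =>
    (memLp_cdf_comp γ (by fun_prop) 1).integrable le_rfl

lemma strictMono_smoothedCdf {ρ : ℝ} (hρ : 0 < ρ) : StrictMono (smoothedCdf ρ) :=
  (strictMono_integral_stdGaussian_cdf_add _).comp (strictMono_mul_left_of_pos hρ)

lemma strictAnti_smoothedCdf {ρ : ℝ} (hρ : ρ < 0) : StrictAnti (smoothedCdf ρ) :=
  (strictMono_integral_stdGaussian_cdf_add _).comp_strictAnti (strictAnti_mul_left hρ)

lemma smoothedCdf_zero : smoothedCdf 0 = fun _ => ∫ z, Φ z ∂γ := by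
  funext x
  simp [smoothedCdf]

lemma covariance_cdf_comp_eq_covariance_smoothedCdf {Ω : Type*} [MeasurableSpace Ω]
    {μ : Measure Ω} [IsProbabilityMeasure μ] {X Z : Ω → ℝ} (hX : μ.map X = γ)
    (hZ : μ.map Z = γ) (hXZ : IndepFun X Z μ) (ρ : ℝ) :
    cov[fun ω => Φ (X ω), fun ω => Φ (ρ * X ω + √(1 - ρ ^ 2) * Z ω); μ] =
      cov[Φ, smoothedCdf ρ; γ] := by
  have := hXZ.covariance_comp_eq_covariance_integral
    (h := fun q => Φ (ρ * q.1 + √(1 - ρ ^ 2) * q.2))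
    (aemeasurable_of_map_neZero (by rw [hX]; infer_instance))
    (aemeasurable_of_map_neZero (by rw [hZ]; infer_instance))
    (memLp_cdf_comp γ aemeasurable_id 2) (memLp_cdf_comp γ (by fun_prop) 2)
  rwa [hX, hZ] at this

theorem one_sided_pvalue_cov_sign_general
    {Ω : Type*} [MeasurableSpace Ω] (μ : Measure Ω) [IsProbabilityMeasure μ]
    (ρ : ℝ)
    (X Z Y : Ω → ℝ)
    (hX : Measure.map X μ = gaussianReal 0 1)
    (hZ : Measure.map Z μ = gaussianReal 0 1)
    (hindep : IndepFun X Z μ)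
    (hY : ∀ ω, Y ω = ρ * X ω + Real.sqrt (1 - ρ ^ 2) * Z ω) :
    (ρ = 0 →
      (∫ ω, (1 - cdf (gaussianReal 0 1) (X ω)) * (1 - cdf (gaussianReal 0 1) (Y ω)) ∂μ) -
        (∫ ω, (1 - cdf (gaussianReal 0 1) (X ω)) ∂μ) *
          (∫ ω, (1 - cdf (gaussianReal 0 1) (Y ω)) ∂μ) = 0) ∧
    (0 < ρ →
      0 < (∫ ω, (1 - cdf (gaussianReal 0 1) (X ω)) * (1 - cdf (gaussianReal 0 1) (Y ω)) ∂μ) -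
        (∫ ω, (1 - cdf (gaussianReal 0 1) (X ω)) ∂μ) *
          (∫ ω, (1 - cdf (gaussianReal 0 1) (Y ω)) ∂μ)) ∧
    (ρ < 0 →
      (∫ ω, (1 - cdf (gaussianReal 0 1) (X ω)) * (1 - cdf (gaussianReal 0 1) (Y ω)) ∂μ) -
        (∫ ω, (1 - cdf (gaussianReal 0 1) (X ω)) ∂μ) *
          (∫ ω, (1 - cdf (gaussianReal 0 1) (Y ω)) ∂μ) < 0) := by
  obtain rfl : Y = _ := funext hY
  have hXm : AEMeasurable X μ := aemeasurable_of_map_neZero (by rw [hX]; infer_instance)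
  have hZm : AEMeasurable Z μ := aemeasurable_of_map_neZero (by rw [hZ]; infer_instance)
  have : NullSingletonClass γ := nullSingletonClass_gaussianReal one_ne_zero
  rw [integral_one_sub_mul_one_sub_sub_eq_covariance (memLp_cdf_comp γ hXm 2)
      (memLp_cdf_comp γ (by fun_prop) 2),
    covariance_cdf_comp_eq_covariance_smoothedCdf hX hZ hindep]
  refine ⟨?_, fun hρ => ?_, fun hρ => ?_⟩
  · rintro rfl
    rw [smoothedCdf_zero, covariance_const_right]
  · exact covariance_pos_of_strictMono strictMono_stdGaussian_cdf (strictMono_smoothedCdf hρ)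
      (memLp_cdf_comp γ aemeasurable_id 2) (memLp_smoothedCdf ρ 2)
  · exact covariance_neg_of_strictMono_of_strictAnti strictMono_stdGaussian_cdf
      (strictAnti_smoothedCdf hρ) (memLp_cdf_comp γ aemeasurable_id 2) (memLp_smoothedCdf ρ 2)

/-- For jointly normal `(X, Y)` with mean zero, unit variances, and correlation `ρ`, the
one-sided p-values `p₁(X) = 1 − Φ(X)`, `p₁(Y) = 1 − Φ(Y)` have covariance whose sign
matches that of `ρ`: zero if `ρ = 0`, positive if `ρ > 0`, negative if `ρ < 0`. -/
theorem one_sided_pvalue_cov_sign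
    {Ω : Type*} [MeasurableSpace Ω] (μ : Measure Ω) [IsProbabilityMeasure μ]
    (ρ : ℝ) (hρ : |ρ| ≤ 1)
    (X Z Y : Ω → ℝ)
    (hX : Measure.map X μ = gaussianReal 0 1)
    (hZ : Measure.map Z μ = gaussianReal 0 1)
    (hindep : IndepFun X Z μ)
    (hY : ∀ ω, Y ω = ρ * X ω + Real.sqrt (1 - ρ ^ 2) * Z ω) :
    (ρ = 0 →
      (∫ ω, (1 - cdf (gaussianReal 0 1) (X ω)) * (1 - cdf (gaussianReal 0 1) (Y ω)) ∂μ) -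
        (∫ ω, (1 - cdf (gaussianReal 0 1) (X ω)) ∂μ) *
          (∫ ω, (1 - cdf (gaussianReal 0 1) (Y ω)) ∂μ) = 0) ∧
    (0 < ρ →
      0 < (∫ ω, (1 - cdf (gaussianReal 0 1) (X ω)) * (1 - cdf (gaussianReal 0 1) (Y ω)) ∂μ) -
        (∫ ω, (1 - cdf (gaussianReal 0 1) (X ω)) ∂μ) *
          (∫ ω, (1 - cdf (gaussianReal 0 1) (Y ω)) ∂μ)) ∧
    (ρ < 0 →
      (∫ ω, (1 - cdf (gaussianReal 0 1) (X ω)) * (1 - cdf (gaussianReal 0 1) (Y ω)) ∂μ) -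
        (∫ ω, (1 - cdf (gaussianReal 0 1) (X ω)) ∂μ) *
          (∫ ω, (1 - cdf (gaussianReal 0 1) (Y ω)) ∂μ) < 0) :=
  one_sided_pvalue_cov_sign_general μ ρ X Z Y hX hZ hindep hY
end

section
/- Suppose X and Y are jointly normal with mean zero, unit variances, and correlation ρ. Define two-sided p-values p₂(X) = 2(1 − Φ(|X|)) and p₂(Y) = 2(1 − Φ(|Y|)). Then Cov(p₂(X), p₂(Y)) ≥ 0. -/
/-!
Write `p(t) = 2(1 - Φ(|t|))` and `Y = ρX + σZ` with `σ = √(1 - ρ²)`. Integrating out `Z` turns the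
covariance into `Cov(p(X), G(X))` with `G(x) = E p(ρx + σZ)`. Both `p` and `G` decrease in `|x|`,
so they vary together and Chebyshev's integral inequality gives a nonnegative covariance.

For `G`, write `p(y) = 2 P(|W| > |y|)` with `W` standard normal: then
`E p(c + σZ) = 2 ∫ P(|c + σZ| < w) dγ(w)`, and the mass that the law of `c + σZ` (symmetric and
unimodal about `c`) puts on the symmetric interval `(-w, w)` can only drop as `|c|` grows.
-/

open MeasureTheory ProbabilityTheory Set
open scoped NNReal ENNReal

lemma integral_mul_integral_le_integral_mul_of_monovary {α : Type*} [MeasurableSpace α]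
    {ν : Measure α} [IsProbabilityMeasure ν] {F G : α → ℝ} (hFG : Monovary F G)
    (hF : Integrable F ν) (hG : Integrable G ν) (hFG_int : Integrable (fun x => F x * G x) ν) :
    (∫ x, F x ∂ν) * (∫ x, G x ∂ν) ≤ ∫ x, F x * G x ∂ν := by
  have hdiag₁ := hFG_int.comp_fst ν
  have hdiag₂ := hFG_int.comp_snd ν
  have hcross₁ := hF.mul_prod hG
  have hcross₂ := hG.mul_prod hF
  have hnonneg : 0 ≤ ∫ q, (F q.1 - F q.2) * (G q.1 - G q.2) ∂ν.prod ν :=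
    integral_nonneg fun q => monovary_iff_forall_mul_nonneg.1 hFG q.2 q.1
  have hexpand : ∫ q, (F q.1 - F q.2) * (G q.1 - G q.2) ∂ν.prod ν =
      2 * ((∫ x, F x * G x ∂ν) - (∫ x, F x ∂ν) * (∫ x, G x ∂ν)) := by
    have hsplit : ∀ q : α × α, (F q.1 - F q.2) * (G q.1 - G q.2) =
        (F q.1 * G q.1 + F q.2 * G q.2) - (F q.1 * G q.2 + G q.1 * F q.2) := fun q => by ring
    simp_rw [hsplit]
    rw [integral_sub (by exact hdiag₁.add hdiag₂) (by exact hcross₁.add hcross₂),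
      integral_add hdiag₁ hdiag₂, integral_add hcross₁ hcross₂,
      integral_fun_fst (fun x => F x * G x), integral_fun_snd (fun x => F x * G x),
      integral_prod_mul, integral_prod_mul]
    simp only [probReal_univ, one_smul]
    ring
  linarith

lemma monovary_of_antitone_in_abs {F G : ℝ → ℝ} (hF : ∀ ⦃s t⦄, |s| ≤ |t| → F t ≤ F s)
    (hG : ∀ ⦃s t⦄, |s| ≤ |t| → G t ≤ G s) : Monovary F G :=
  fun _ _ h => hF (le_of_not_ge fun h' => h.not_ge (hG h'))

lemma ProbabilityTheory.IndepFun.integral_comp_prodMk {Ω α β E : Type*} [MeasurableSpace Ω]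
    [MeasurableSpace α] [MeasurableSpace β] [NormedAddCommGroup E] [NormedSpace ℝ E] {μ : Measure Ω}
    [IsFiniteMeasure μ] {X : Ω → α} {Z : Ω → β} (hind : IndepFun X Z μ) (hX : AEMeasurable X μ)
    (hZ : AEMeasurable Z μ) {f : α × β → E} (hf : Integrable f ((μ.map X).prod (μ.map Z))) :
    ∫ ω, f (X ω, Z ω) ∂μ = ∫ x, ∫ z, f (x, z) ∂μ.map Z ∂μ.map X := by
  rw [← integral_prod _ hf, ← hind.map_prod_eq_prod_map_map hX hZ] at *
  exact (integral_map (hX.prodMk hZ) hf.aestronglyMeasurable).symm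

lemma intervalIntegral_shift_le_of_even_of_antitoneOn {f : ℝ → ℝ} (hf : Continuous f)
    (heven : ∀ x, f (-x) = f x) (hanti : AntitoneOn f (Ici 0)) {w c c' : ℝ} (hw : 0 ≤ w)
    (hc : 0 ≤ c) (hcc' : c ≤ c') :
    ∫ x in -w - c'..w - c', f x ≤ ∫ x in -w - c..w - c, f x := by
  have hii : ∀ a b, IntervalIntegrable f volume a b := hf.intervalIntegrable
  have hdiff : (∫ x in -w - c..w - c, f x) - ∫ x in -w - c'..w - c', f x =
      ∫ s in c..c', (f (w - s) - f (-w - s)) := by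
    rw [intervalIntegral.integral_interval_sub_interval_comm (hii _ _) (hii _ _) (hii _ _),
      intervalIntegral.integral_sub (f := fun s => f (w - s)) (g := fun s => f (-w - s))
        ((hf.comp (continuous_sub_left w)).intervalIntegrable _ _)
        ((hf.comp (continuous_sub_left (-w))).intervalIntegrable _ _),
      intervalIntegral.integral_comp_sub_left f w, intervalIntegral.integral_comp_sub_left f (-w),
      intervalIntegral.integral_symm (-w - c), intervalIntegral.integral_symm (w - c)]
    ring
  have hslab : 0 ≤ ∫ s in c..c', (f (w - s) - f (-w - s)) := by
    refine intervalIntegral.integral_nonneg hcc' fun s hs => sub_nonneg.2 ?_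
    have hs0 : 0 ≤ s := hc.trans hs.1
    have habs : f |w - s| = f (w - s) := by
      rcases abs_choice (w - s) with h | h <;> rw [h]; exact heven _
    calc f (-w - s) = f (w + s) := by rw [← heven, neg_sub, sub_neg_eq_add, add_comm]
      _ ≤ f |w - s| := hanti (abs_nonneg (w - s)) (by simp only [mem_Ici]; linarith)
          (abs_le.2 ⟨by linarith, by linarith⟩)
      _ = f (w - s) := habs
  linarith

lemma lintegral_measure_Ioi_abs_eq_lintegral_measure_Ioo (ν κ : Measure ℝ) [SFinite ν]
    [SFinite κ] :
    ∫⁻ y, κ (Ioi |y|) ∂ν = ∫⁻ w, ν (Ioo (-w) w) ∂κ := by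
  have hA : MeasurableSet {q : ℝ × ℝ | |q.1| < q.2} :=
    measurableSet_lt (measurable_abs.comp measurable_fst) measurable_snd
  convert (Measure.prod_apply (μ := ν) (ν := κ) hA).symm.trans (Measure.prod_apply_symm hA)
    using 4 with y w
  · ext; simp
  · ext; simp [abs_lt]

lemma continuous_gaussianPDFReal (μ : ℝ) (v : ℝ≥0) : Continuous (gaussianPDFReal μ v) := by
  unfold gaussianPDFReal; fun_prop

lemma gaussianPDFReal_zero_neg (v : ℝ≥0) (x : ℝ) :
    gaussianPDFReal 0 v (-x) = gaussianPDFReal 0 v x := by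
  simp [gaussianPDFReal]

lemma antitoneOn_gaussianPDFReal_zero (v : ℝ≥0) : AntitoneOn (gaussianPDFReal 0 v) (Ici 0) := by
  intro x hx y _ hxy
  simp only [gaussianPDFReal, sub_zero]
  gcongr

lemma gaussianReal_apply_Ioo (μ : ℝ) {v : ℝ≥0} (hv : v ≠ 0) {a b : ℝ} (hab : a ≤ b) :
    gaussianReal μ v (Ioo a b) =
      ENNReal.ofReal (∫ x in a - μ..b - μ, gaussianPDFReal 0 v x) := by
  rw [gaussianReal_apply_eq_integral _ hv, ← intervalIntegral.integral_comp_sub_right,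
    intervalIntegral.integral_of_le hab, integral_Ioc_eq_integral_Ioo]
  simp_rw [gaussianPDFReal_sub, zero_add]

lemma gaussianReal_abs_apply_Ioo (μ : ℝ) (v : ℝ≥0) (w : ℝ) :
    gaussianReal |μ| v (Ioo (-w) w) = gaussianReal μ v (Ioo (-w) w) := by
  rcases abs_choice μ with h | h
  · rw [h]
  · rw [h, ← gaussianReal_map_neg, Measure.map_apply measurable_neg measurableSet_Ioo,
      Set.neg_preimage, Set.neg_Ioo, neg_neg]

lemma gaussianReal_Ioo_le_of_abs_le (v : ℝ≥0) {c c' : ℝ} (h : |c| ≤ |c'|) (w : ℝ) :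
    gaussianReal c' v (Ioo (-w) w) ≤ gaussianReal c v (Ioo (-w) w) := by
  rw [← gaussianReal_abs_apply_Ioo c, ← gaussianReal_abs_apply_Ioo c']
  rcases le_or_gt w 0 with hw | hw
  · simp [Ioo_eq_empty (show ¬ -w < w by linarith)]
  rcases eq_or_ne v 0 with rfl | hv
  · simp only [gaussianReal_zero_var, Measure.dirac_apply' _ measurableSet_Ioo]
    by_cases hc' : |c'| ∈ Ioo (-w) w
    · have hc : |c| ∈ Ioo (-w) w := ⟨by linarith [abs_nonneg c], h.trans_lt hc'.2⟩
      simp [hc, hc']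
    · simp [hc']
  · rw [gaussianReal_apply_Ioo _ hv (by linarith), gaussianReal_apply_Ioo _ hv (by linarith)]
    exact ENNReal.ofReal_le_ofReal <| intervalIntegral_shift_le_of_even_of_antitoneOn
      (continuous_gaussianPDFReal 0 v) (gaussianPDFReal_zero_neg v)
      (antitoneOn_gaussianPDFReal_zero v) hw.le (abs_nonneg c) h

lemma gaussianReal_map_const_add_const_mul (c σ : ℝ) :
    (gaussianReal 0 1).map (fun z => c + σ * z) =
      gaussianReal c (.mk (σ ^ 2) (sq_nonneg σ)) := by
  rw [show (fun z => c + σ * z) = (c + ·) ∘ (σ * ·) from rfl,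
    ← Measure.map_map (by fun_prop) (by fun_prop), gaussianReal_map_const_mul,
    gaussianReal_map_const_add]
  simp

noncomputable def twoSidedPValue (t : ℝ) : ℝ := 2 * (1 - cdf (gaussianReal 0 1) |t|)

lemma twoSidedPValue_eq_two_mul_measureReal_Ioi (t : ℝ) :
    twoSidedPValue t = 2 * (gaussianReal 0 1).real (Ioi |t|) := by
  rw [twoSidedPValue, cdf_eq_real, ← compl_Iic, probReal_compl_eq_one_sub measurableSet_Iic]

lemma measurable_twoSidedPValue : Measurable twoSidedPValue :=
  measurable_const.mul (measurable_const.sub ((monotone_cdf _).measurable.comp measurable_abs))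

lemma abs_twoSidedPValue_le (t : ℝ) : |twoSidedPValue t| ≤ 2 := by
  have := cdf_nonneg (gaussianReal 0 1) |t|
  have := cdf_le_one (gaussianReal 0 1) |t|
  rw [twoSidedPValue, abs_le]
  constructor <;> linarith

lemma twoSidedPValue_le_of_abs_le {s t : ℝ} (h : |s| ≤ |t|) :
    twoSidedPValue t ≤ twoSidedPValue s := by
  have := monotone_cdf (gaussianReal 0 1) h
  rw [twoSidedPValue, twoSidedPValue]
  linarith

lemma integrable_twoSidedPValue_comp {α : Type*} [MeasurableSpace α] {μ : Measure α}
    [IsFiniteMeasure μ] {f : α → ℝ} (hf : AEMeasurable f μ) :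
    Integrable (fun a => twoSidedPValue (f a)) μ :=
  .of_bound (measurable_twoSidedPValue.comp_aemeasurable hf).aestronglyMeasurable 2
    (ae_of_all _ fun a => abs_twoSidedPValue_le (f a))

lemma integral_twoSidedPValue (ν : Measure ℝ) [IsProbabilityMeasure ν] :
    ∫ y, twoSidedPValue y ∂ν = 2 * (∫⁻ w, ν (Ioo (-w) w) ∂gaussianReal 0 1).toReal := by
  have hmeas : Measurable fun y : ℝ => gaussianReal 0 1 (Ioi |y|) :=
    (Antitone.measurable fun _ _ h => measure_mono (Ioi_subset_Ioi h)).comp measurable_abs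
  simp_rw [twoSidedPValue_eq_two_mul_measureReal_Ioi, integral_const_mul, measureReal_def]
  rw [integral_toReal hmeas.aemeasurable (ae_of_all _ fun _ => measure_lt_top _ _),
    lintegral_measure_Ioi_abs_eq_lintegral_measure_Ioo]

lemma integral_twoSidedPValue_gaussianReal_le (v : ℝ≥0) {c c' : ℝ} (h : |c| ≤ |c'|) :
    ∫ y, twoSidedPValue y ∂gaussianReal c' v ≤ ∫ y, twoSidedPValue y ∂gaussianReal c v := by
  rw [integral_twoSidedPValue, integral_twoSidedPValue]
  refine mul_le_mul_of_nonneg_left (ENNReal.toReal_mono ?_ ?_) zero_le_two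
  · exact ne_top_of_le_ne_top (by simp) (lintegral_mono fun _ => prob_le_one)
  · exact lintegral_mono fun w => gaussianReal_Ioo_le_of_abs_le v h w

lemma integral_twoSidedPValue_const_add_const_mul_le (σ : ℝ) {c c' : ℝ} (h : |c| ≤ |c'|) :
    ∫ z, twoSidedPValue (c' + σ * z) ∂gaussianReal 0 1 ≤
      ∫ z, twoSidedPValue (c + σ * z) ∂gaussianReal 0 1 := by
  have hlaw : ∀ a, ∫ z, twoSidedPValue (a + σ * z) ∂gaussianReal 0 1 =
      ∫ y, twoSidedPValue y ∂gaussianReal a (.mk (σ ^ 2) (sq_nonneg σ)) := fun a => by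
    rw [← gaussianReal_map_const_add_const_mul,
      integral_map (by fun_prop) measurable_twoSidedPValue.aestronglyMeasurable]
  rw [hlaw, hlaw]
  exact integral_twoSidedPValue_gaussianReal_le _ h

lemma monovary_twoSidedPValue_integral_const_mul_add (ρ σ : ℝ) :
    Monovary twoSidedPValue fun x => ∫ z, twoSidedPValue (ρ * x + σ * z) ∂gaussianReal 0 1 :=
  monovary_of_antitone_in_abs (fun _ _ => twoSidedPValue_le_of_abs_le) fun s t h =>
    integral_twoSidedPValue_const_add_const_mul_le σ <| by
      simpa only [abs_mul] using mul_le_mul_of_nonneg_left h (abs_nonneg ρ)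

theorem two_sided_pvalue_cov_nonneg_general
    {Ω : Type*} [MeasurableSpace Ω] (μ : Measure Ω) [IsProbabilityMeasure μ]
    (ρ : ℝ)
    (X Z Y : Ω → ℝ)
    (hX : Measure.map X μ = gaussianReal 0 1)
    (hZ : Measure.map Z μ = gaussianReal 0 1)
    (hindep : IndepFun X Z μ)
    (hY : ∀ ω, Y ω = ρ * X ω + Real.sqrt (1 - ρ ^ 2) * Z ω) :
    0 ≤ (∫ ω, (2 * (1 - cdf (gaussianReal 0 1) |X ω|)) *
            (2 * (1 - cdf (gaussianReal 0 1) |Y ω|)) ∂μ) -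
        (∫ ω, 2 * (1 - cdf (gaussianReal 0 1) |X ω|) ∂μ) *
          (∫ ω, 2 * (1 - cdf (gaussianReal 0 1) |Y ω|) ∂μ) := by
  set σ := Real.sqrt (1 - ρ ^ 2)
  set γ := gaussianReal 0 1
  have hXm : AEMeasurable X μ := aemeasurable_of_map_neZero (by rw [hX]; infer_instance)
  have hZm : AEMeasurable Z μ := aemeasurable_of_map_neZero (by rw [hZ]; infer_instance)
  have hpair (f : ℝ × ℝ → ℝ) (hf : Integrable f (γ.prod γ)) :
      ∫ ω, f (X ω, Z ω) ∂μ = ∫ x, ∫ z, f (x, z) ∂γ ∂γ := by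
    rw [hindep.integral_comp_prodMk hXm hZm (by rwa [hX, hZ]), hX, hZ]
  have hYp : Integrable (fun q : ℝ × ℝ => twoSidedPValue (ρ * q.1 + σ * q.2)) (γ.prod γ) :=
    integrable_twoSidedPValue_comp (by fun_prop)
  have hXYp : Integrable
      (fun q : ℝ × ℝ => twoSidedPValue q.1 * twoSidedPValue (ρ * q.1 + σ * q.2)) (γ.prod γ) :=
    hYp.bdd_mul (measurable_twoSidedPValue.comp measurable_fst).aestronglyMeasurable
      (ae_of_all _ fun q => abs_twoSidedPValue_le q.1)
  have hmeanX : ∫ ω, twoSidedPValue (X ω) ∂μ = ∫ x, twoSidedPValue x ∂γ := by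
    rw [← hX, integral_map hXm measurable_twoSidedPValue.aestronglyMeasurable]
  change 0 ≤ (∫ ω, twoSidedPValue (X ω) * twoSidedPValue (Y ω) ∂μ) -
    (∫ ω, twoSidedPValue (X ω) ∂μ) * ∫ ω, twoSidedPValue (Y ω) ∂μ
  simp_rw [hY, hpair _ hYp, hpair _ hXYp, integral_const_mul, hmeanX, sub_nonneg]
  refine integral_mul_integral_le_integral_mul_of_monovary
    (monovary_twoSidedPValue_integral_const_mul_add ρ σ)
    (integrable_twoSidedPValue_comp aemeasurable_id) hYp.integral_prod_left ?_
  simpa only [integral_const_mul] using hXYp.integral_prod_left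

/-- For jointly normal `(X, Y)` with mean zero, unit variances, and correlation `ρ`, the
two-sided p-values `p₂(X) = 2(1 − Φ(|X|))`, `p₂(Y) = 2(1 − Φ(|Y|))` are nonnegatively
correlated: `Cov(p₂(X), p₂(Y)) ≥ 0`. -/
theorem two_sided_pvalue_cov_nonneg
    {Ω : Type*} [MeasurableSpace Ω] (μ : Measure Ω) [IsProbabilityMeasure μ]
    (ρ : ℝ) (hρ : |ρ| ≤ 1)
    (X Z Y : Ω → ℝ)
    (hX : Measure.map X μ = gaussianReal 0 1)
    (hZ : Measure.map Z μ = gaussianReal 0 1)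
    (hindep : IndepFun X Z μ)
    (hY : ∀ ω, Y ω = ρ * X ω + Real.sqrt (1 - ρ ^ 2) * Z ω) :
    0 ≤ (∫ ω, (2 * (1 - cdf (gaussianReal 0 1) |X ω|)) *
            (2 * (1 - cdf (gaussianReal 0 1) |Y ω|)) ∂μ) -
        (∫ ω, 2 * (1 - cdf (gaussianReal 0 1) |X ω|) ∂μ) *
          (∫ ω, 2 * (1 - cdf (gaussianReal 0 1) |Y ω|) ∂μ) :=
  two_sided_pvalue_cov_nonneg_general μ ρ X Z Y hX hZ hindep hY
end
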